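/- Let G be a simple digraph on finite vertex set V with degree sequence d, and suppose there is a three-element set C = {u,v,w} ⊆ V with arcs (u,v),(v,w),(w,u) and no arcs (v,u),(w,v),(u,w), such that every vertex x ∈ V \ C lies in one of the four classes C^0, C^-, C^+, C^± (defined by: C^0 — no arcs between x and C; C^- — all arcs from x to C and none from C to x; C^+ — all arcs from C to x and none from x to C; C^± — all arcs in both directions between x and C), and such that the arcs among V \ C satisfy: every ordered pair from C^± ∪ C^- to C^± ∪ C^+ (with distinct endpoints) is an arc, no ordered pair from C^+ ∪ C^0 to C^- ∪ C^0 (with distinct endpoints) is an arc, and arcs within C^- and within C^+ and between the remaining class pairs marked * are unrestricted. Then every realization G' ∈ R(d) of the degree sequence d of G induces a directed 3-cycle on C. -/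

import Mathlib

/-- A simple directed graph on vertex set `V`: an irreflexive (Boolean) arc
relation, i.e. no self-loops and at most one arc in each direction. -/
structure SDigraph (V : Type) where
  Adj : V → V → Bool
  irrefl : ∀ v, Adj v v = false

/-- Out-degree of a vertex. -/
def SDigraph.outDeg {V : Type} [Fintype V] [DecidableEq V]
    (G : SDigraph V) (v : V) : ℕ :=
  (Finset.univ.filter fun x => G.Adj v x = true).card

/-- In-degree of a vertex. -/
def SDigraph.inDeg {V : Type} [Fintype V] [DecidableEq V]
    (G : SDigraph V) (v : V) : ℕ :=
  (Finset.univ.filter fun x => G.Adj x v = true).card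

/-- `G` realizes the integer-pair (degree) sequence `d`: vertex `v` has
out-degree `(d v).1` and in-degree `(d v).2`. -/
def Realizes {V : Type} [Fintype V] [DecidableEq V]
    (G : SDigraph V) (d : V → ℕ × ℕ) : Prop :=
  ∀ v, G.outDeg v = (d v).1 ∧ G.inDeg v = (d v).2

/-- `H` is obtained from `G` by a single 2-switch: arcs `(v₁,v₂)`, `(v₃,v₄)`
are replaced by `(v₁,v₄)`, `(v₃,v₂)`, allowed only when the four vertices
are distinct, the former two are arcs and the latter two are not. -/
def TwoSwitch {V : Type} [DecidableEq V] (G H : SDigraph V) : Prop :=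
  ∃ v₁ v₂ v₃ v₄ : V,
    v₁ ≠ v₂ ∧ v₁ ≠ v₃ ∧ v₁ ≠ v₄ ∧ v₂ ≠ v₃ ∧ v₂ ≠ v₄ ∧ v₃ ≠ v₄ ∧
    G.Adj v₁ v₂ = true ∧ G.Adj v₃ v₄ = true ∧
    G.Adj v₁ v₄ = false ∧ G.Adj v₃ v₂ = false ∧
    ∀ x y, H.Adj x y =
      if (x = v₁ ∧ y = v₂) ∨ (x = v₃ ∧ y = v₄) then false
      else if (x = v₁ ∧ y = v₄) ∨ (x = v₃ ∧ y = v₂) then true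
      else G.Adj x y

/-- `G` and `H` differ by a single 2-switch (in either direction). -/
def TwoSwitchStep {V : Type} [DecidableEq V] (G H : SDigraph V) : Prop :=
  TwoSwitch G H ∨ TwoSwitch H G

/-- `H` is reachable from `G` by a finite sequence of 2-switches. -/
def Reach2 {V : Type} [DecidableEq V] (G H : SDigraph V) : Prop :=
  Relation.ReflTransGen TwoSwitchStep G H

/-- `H` is obtained from `G` by reorienting an induced directed 3-cycle:
there are distinct `u v w` with arcs `(u,v),(v,w),(w,u)` and no arcs
`(v,u),(w,v),(u,w)`, and `H` replaces these three arcs by the reversed ones. -/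
def CycleReorient {V : Type} [DecidableEq V] (G H : SDigraph V) : Prop :=
  ∃ u v w : V, u ≠ v ∧ v ≠ w ∧ u ≠ w ∧
    G.Adj u v = true ∧ G.Adj v w = true ∧ G.Adj w u = true ∧
    G.Adj v u = false ∧ G.Adj w v = false ∧ G.Adj u w = false ∧
    ∀ x y, H.Adj x y =
      if (x = u ∨ x = v ∨ x = w) ∧ (y = u ∨ y = v ∨ y = w) then G.Adj y x
      else G.Adj x y

/-- The three vertices `u, v, w` induce a directed 3-cycle in `G`: the induced
subgraph on them consists of exactly the three arcs of one cyclic orientation. -/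
def InducesC3 {V : Type} (G : SDigraph V) (u v w : V) : Prop :=
  (G.Adj u v = true ∧ G.Adj v w = true ∧ G.Adj w u = true ∧
    G.Adj v u = false ∧ G.Adj w v = false ∧ G.Adj u w = false) ∨
  (G.Adj v u = true ∧ G.Adj w v = true ∧ G.Adj u w = true ∧
    G.Adj u v = false ∧ G.Adj v w = false ∧ G.Adj w u = false)

/-- The digraph obtained from `G` by reversing all arcs among `{u, v, w}`
(and leaving all other arcs unchanged).  When `{u,v,w}` induces a directed
3-cycle in `G`, this is exactly the reorientation of that 3-cycle. -/
def flip3 {V : Type} [DecidableEq V] (G : SDigraph V) (u v w : V) : SDigraph V where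
  Adj x y :=
    if (x = u ∨ x = v ∨ x = w) ∧ (y = u ∨ y = v ∨ y = w) then G.Adj y x
    else G.Adj x y
  irrefl := by
    intro x
    simp only [ite_self]
    exact G.irrefl x

/-- `x` is in class `C⁰` relative to `C = {u,v,w}`: no arcs between `x` and
`C` in either direction. -/
def InC0 {V : Type} (G : SDigraph V) (u v w x : V) : Prop :=
  G.Adj x u = false ∧ G.Adj x v = false ∧ G.Adj x w = false ∧
  G.Adj u x = false ∧ G.Adj v x = false ∧ G.Adj w x = false

/-- `x` is in class `C⁻`: all three arcs from `x` to `C` are present and no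
arcs from `C` to `x`. -/
def InCminus {V : Type} (G : SDigraph V) (u v w x : V) : Prop :=
  G.Adj x u = true ∧ G.Adj x v = true ∧ G.Adj x w = true ∧
  G.Adj u x = false ∧ G.Adj v x = false ∧ G.Adj w x = false

/-- `x` is in class `C⁺`: all three arcs from `C` to `x` are present and no
arcs from `x` to `C`. -/
def InCplus {V : Type} (G : SDigraph V) (u v w x : V) : Prop :=
  G.Adj x u = false ∧ G.Adj x v = false ∧ G.Adj x w = false ∧
  G.Adj u x = true ∧ G.Adj v x = true ∧ G.Adj w x = true

/-- `x` is in class `C^±`: all six arcs between `x` and `C` are present. -/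
def InCpm {V : Type} (G : SDigraph V) (u v w x : V) : Prop :=
  G.Adj x u = true ∧ G.Adj x v = true ∧ G.Adj x w = true ∧
  G.Adj u x = true ∧ G.Adj v x = true ∧ G.Adj w x = true


/-! Let `A = C ∪ C^± ∪ C⁻` and `B = C ∪ C^± ∪ C⁺`. Double counting the arcs with head in `B` and
those with tail outside `A` shows that the number of non-arcs `(x, y)` with `x ∈ A`, `y ∈ B`,
`x ≠ y`, plus the number of arcs from `Aᶜ` to `Bᶜ`, is determined by the degree sequence. In `G`
it is `3`: the only non-arcs from `A` to `B` are the three reversed cycle arcs, and the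
`M`-partition forbids arcs from `Aᶜ` to `Bᶜ`. Every `c ∈ C` has all its out-neighbours in `B` and
all its in-neighbours in `A`, yet misses one of each in `G`; keeping its degrees, it misses one in
any realization `G'` too. So the at most three non-arcs of `G'` from `A` to `B` have every vertex
of `C` as a tail and as a head: they are the arcs of a fixed-point-free permutation of `C`, whose
complement in `C` is a directed 3-cycle. -/

open Finset

theorem image_eq_and_injOn_of_subset_image_of_card_le {α β : Type*} [DecidableEq β] {f : α → β}
    {s : Finset α} {t : Finset β} (ht : t ⊆ s.image f) (hs : #s ≤ #t) :
    s.image f = t ∧ Set.InjOn f s := by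
  have himage : s.image f = t := (eq_of_subset_of_card_le ht (card_image_le.trans hs)).symm
  exact ⟨himage, card_image_iff.1 (le_antisymm card_image_le (himage ▸ hs))⟩

namespace SDigraph

variable {V : Type}

def reverse (H : SDigraph V) : SDigraph V where
  Adj x y := H.Adj y x
  irrefl := H.irrefl

def arcs (H : SDigraph V) (S T : Finset V) : Finset (V × V) :=
  (S ×ˢ T).filter fun p => H.Adj p.1 p.2 = true

variable [DecidableEq V]

def nonArcs (H : SDigraph V) (S T : Finset V) : Finset (V × V) :=
  (S ×ˢ T).filter fun p => p.1 ≠ p.2 ∧ H.Adj p.1 p.2 = false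

theorem card_arcs_add_card_nonArcs (H : SDigraph V) (S T : Finset V) :
    #(H.arcs S T) + #(H.nonArcs S T) = #((S ×ˢ T).filter fun p => p.1 ≠ p.2) := by
  have harcs : H.arcs S T = ((S ×ˢ T).filter fun p => p.1 ≠ p.2).filter
      fun p => H.Adj p.1 p.2 = true := by
    ext p
    simp only [arcs, mem_filter]
    refine ⟨fun ⟨hp, hadj⟩ => ⟨⟨hp, fun h => ?_⟩, hadj⟩, fun ⟨⟨hp, _⟩, hadj⟩ => ⟨hp, hadj⟩⟩
    rw [h, H.irrefl] at hadj
    exact Bool.false_ne_true hadj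
  have hnonArcs : H.nonArcs S T = ((S ×ˢ T).filter fun p => p.1 ≠ p.2).filter
      fun p => ¬H.Adj p.1 p.2 = true := by
    simp only [nonArcs, filter_filter, Bool.not_eq_true]
  rw [harcs, hnonArcs, card_filter_add_card_filter_not]

variable [Fintype V]

theorem sum_outDeg_eq_card_arcs (H : SDigraph V) (S : Finset V) :
    ∑ x ∈ S, H.outDeg x = #(H.arcs S univ) := by
  simp only [arcs, outDeg, card_filter, sum_product]

theorem sum_inDeg_eq_card_arcs (H : SDigraph V) (T : Finset V) :
    ∑ y ∈ T, H.inDeg y = #(H.arcs univ T) := by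
  simp only [arcs, inDeg, card_filter, sum_product_right]

theorem card_arcs_add_card_arcs_compl_left (H : SDigraph V) (A T : Finset V) :
    #(H.arcs A T) + #(H.arcs Aᶜ T) = #(H.arcs univ T) := by
  rw [arcs, arcs, arcs, ← card_union_of_disjoint
    (disjoint_filter_filter (disjoint_product.2 (Or.inl disjoint_compl_right))),
    ← filter_union, ← union_product, union_compl]

theorem card_arcs_add_card_arcs_compl_right (H : SDigraph V) (S B : Finset V) :
    #(H.arcs S B) + #(H.arcs S Bᶜ) = #(H.arcs S univ) := by
  rw [arcs, arcs, arcs, ← card_union_of_disjoint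
    (disjoint_filter_filter (disjoint_product.2 (Or.inr disjoint_compl_right))),
    ← filter_union, ← product_union, union_compl]

theorem sum_inDeg_add_card_arcs_compl (H : SDigraph V) (A B : Finset V) :
    ∑ y ∈ B, H.inDeg y + #(H.arcs Aᶜ Bᶜ) = #(H.arcs A B) + ∑ x ∈ Aᶜ, H.outDeg x := by
  rw [sum_inDeg_eq_card_arcs, sum_outDeg_eq_card_arcs, ← card_arcs_add_card_arcs_compl_left,
    ← card_arcs_add_card_arcs_compl_right]
  ring

theorem card_nonArcs_add_card_arcs_compl_of_realizes {H H' : SDigraph V}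
    (hH' : Realizes H' fun z => (H.outDeg z, H.inDeg z)) (A B : Finset V) :
    #(H'.nonArcs A B) + #(H'.arcs Aᶜ Bᶜ) = #(H.nonArcs A B) + #(H.arcs Aᶜ Bᶜ) := by
  have hin : ∑ y ∈ B, H'.inDeg y = ∑ y ∈ B, H.inDeg y := sum_congr rfl fun y _ => (hH' y).2
  have hout : ∑ x ∈ Aᶜ, H'.outDeg x = ∑ x ∈ Aᶜ, H.outDeg x :=
    sum_congr rfl fun x _ => (hH' x).1
  have hcount := sum_inDeg_add_card_arcs_compl H A B
  have hcount' := sum_inDeg_add_card_arcs_compl H' A B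
  have hsplit := card_arcs_add_card_nonArcs H A B
  have hsplit' := card_arcs_add_card_nonArcs H' A B
  omega

theorem exists_nonAdj_of_outDeg_eq {H H' : SDigraph V} {x y : V} {T : Finset V}
    (hdeg : H'.outDeg x = H.outDeg x) (hT : ∀ z, H.Adj x z = true → z ∈ T) (hy : y ∈ T)
    (hxy : x ≠ y) (hnon : H.Adj x y = false) : ∃ z ∈ T, x ≠ z ∧ H'.Adj x z = false := by
  by_contra! h
  have hlt : H.outDeg x < #(T.erase x) := by
    refine card_lt_card ((ssubset_iff_of_subset fun z hz => ?_).2 ⟨y, ?_, ?_⟩)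
    · have hz := (mem_filter.1 hz).2
      exact mem_erase.2 ⟨fun h => by simp [h, H.irrefl] at hz, hT z hz⟩
    · exact mem_erase.2 ⟨hxy.symm, hy⟩
    · simp [hnon]
  have hle : #(T.erase x) ≤ H'.outDeg x := by
    refine card_le_card fun z hz => ?_
    obtain ⟨hzx, hzT⟩ := mem_erase.1 hz
    simpa using h z hzT (Ne.symm hzx)
  omega

theorem exists_nonAdj_of_inDeg_eq {H H' : SDigraph V} {x y : V} {T : Finset V}
    (hdeg : H'.inDeg y = H.inDeg y) (hT : ∀ z, H.Adj z y = true → z ∈ T) (hx : x ∈ T)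
    (hxy : x ≠ y) (hnon : H.Adj x y = false) : ∃ z ∈ T, z ≠ y ∧ H'.Adj z y = false := by
  obtain ⟨z, hz, hyz, hadj⟩ :=
    exists_nonAdj_of_outDeg_eq (H := H.reverse) (H' := H'.reverse) hdeg hT hx hxy.symm hnon
  exact ⟨z, hz, hyz.symm, hadj⟩

end SDigraph

section DirectedTriangle

variable {V : Type} [DecidableEq V] {H : SDigraph V} {u v w : V}

theorem inducesC3_of_unique_nonAdj (huv : u ≠ v) (hvw : v ≠ w) (huw : u ≠ w)
    (hout : ∀ x ∈ ({u, v, w} : Finset V), ∃ y ∈ ({u, v, w} : Finset V), x ≠ y ∧ H.Adj x y = false)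
    (hout_inj : ∀ x ∈ ({u, v, w} : Finset V), ∀ y ∈ ({u, v, w} : Finset V),
      ∀ z ∈ ({u, v, w} : Finset V), x ≠ y → x ≠ z → H.Adj x y = false → H.Adj x z = false → y = z)
    (hin_inj : ∀ x ∈ ({u, v, w} : Finset V), ∀ y ∈ ({u, v, w} : Finset V),
      ∀ z ∈ ({u, v, w} : Finset V), x ≠ z → y ≠ z → H.Adj x z = false → H.Adj y z = false → x = y) :
    InducesC3 H u v w := by
  simp only [mem_insert, mem_singleton, forall_eq_or_imp, forall_eq, exists_eq_or_imp,
    exists_eq_left] at hout hout_inj hin_inj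
  unfold InducesC3
  revert hout hout_inj hin_inj
  generalize H.Adj u v = a, H.Adj v u = a', H.Adj v w = b, H.Adj w v = b', H.Adj w u = c,
    H.Adj u w = c'
  cases a <;> cases a' <;> cases b <;> cases b' <;> cases c <;> cases c' <;>
    simp [huv, hvw, huw, huv.symm, hvw.symm, huw.symm]

theorem inducesC3_of_card_nonArcs_le_three {A B : Finset V} (huv : u ≠ v) (hvw : v ≠ w)
    (huw : u ≠ w) (hA : {u, v, w} ⊆ A) (hB : {u, v, w} ⊆ B) (hcard : #(H.nonArcs A B) ≤ 3)
    (htail : {u, v, w} ⊆ (H.nonArcs A B).image Prod.fst)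
    (hhead : {u, v, w} ⊆ (H.nonArcs A B).image Prod.snd) :
    InducesC3 H u v w := by
  have hC : #({u, v, w} : Finset V) = 3 := card_eq_three.2 ⟨u, v, w, huv, huw, hvw, rfl⟩
  obtain ⟨-, htail_inj⟩ := image_eq_and_injOn_of_subset_image_of_card_le htail (hC ▸ hcard)
  obtain ⟨hhead_eq, hhead_inj⟩ := image_eq_and_injOn_of_subset_image_of_card_le hhead (hC ▸ hcard)
  have hmem : ∀ x ∈ ({u, v, w} : Finset V), ∀ y ∈ ({u, v, w} : Finset V), x ≠ y →
      H.Adj x y = false → (x, y) ∈ H.nonArcs A B := fun x hx y hy hxy hadj =>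
    mem_filter.2 ⟨mem_product.2 ⟨hA hx, hB hy⟩, hxy, hadj⟩
  refine inducesC3_of_unique_nonAdj huv hvw huw (fun x hx => ?_)
    (fun x hx y hy z hz hxy hxz hy' hz' => ?_) (fun x hx y hy z hz hxz hyz hx' hy' => ?_)
  · obtain ⟨p, hp, rfl⟩ := mem_image.1 (htail hx)
    exact ⟨p.2, hhead_eq ▸ mem_image_of_mem _ hp, (mem_filter.1 hp).2⟩
  · exact congrArg Prod.snd (htail_inj (hmem x hx y hy hxy hy') (hmem x hx z hz hxz hz') rfl)
  · exact congrArg Prod.fst (hhead_inj (hmem x hx z hz hxz hx') (hmem y hy z hz hyz hy') rfl)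

end DirectedTriangle

namespace SDigraph

variable {V : Type} [Fintype V] [DecidableEq V] {H H' : SDigraph V}

theorem subset_image_fst_nonArcs_of_realizes (hH' : Realizes H' fun z => (H.outDeg z, H.inDeg z))
    {A B C : Finset V} (hCA : C ⊆ A) (hB : ∀ c ∈ C, ∀ y, H.Adj c y = true → y ∈ B)
    (hnon : ∀ c ∈ C, ∃ y ∈ B, c ≠ y ∧ H.Adj c y = false) :
    C ⊆ (H'.nonArcs A B).image Prod.fst := by
  intro c hc
  obtain ⟨y, hy, hcy, hadj⟩ := hnon c hc
  obtain ⟨z, hz, hcz, hadj'⟩ := exists_nonAdj_of_outDeg_eq (hH' c).1 (hB c hc) hy hcy hadj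
  exact mem_image.2 ⟨(c, z), mem_filter.2 ⟨mem_product.2 ⟨hCA hc, hz⟩, hcz, hadj'⟩, rfl⟩

theorem subset_image_snd_nonArcs_of_realizes (hH' : Realizes H' fun z => (H.outDeg z, H.inDeg z))
    {A B C : Finset V} (hCB : C ⊆ B) (hA : ∀ c ∈ C, ∀ x, H.Adj x c = true → x ∈ A)
    (hnon : ∀ c ∈ C, ∃ x ∈ A, x ≠ c ∧ H.Adj x c = false) :
    C ⊆ (H'.nonArcs A B).image Prod.snd := by
  intro c hc
  obtain ⟨x, hx, hxc, hadj⟩ := hnon c hc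
  obtain ⟨z, hz, hzc, hadj'⟩ := exists_nonAdj_of_inDeg_eq (hH' c).2 (hA c hc) hx hxc hadj
  exact mem_image.2 ⟨(z, c), mem_filter.2 ⟨mem_product.2 ⟨hz, hCB hc⟩, hzc, hadj'⟩, rfl⟩

end SDigraph

section MPartition

variable {V : Type} {G : SDigraph V} {u v w x : V}

def InSomeClass (G : SDigraph V) (u v w x : V) : Prop :=
  InC0 G u v w x ∨ InCminus G u v w x ∨ InCplus G u v w x ∨ InCpm G u v w x

namespace InSomeClass

theorem inCpm_or_inCminus (hx : InSomeClass G u v w x) (h : G.Adj x u = true) :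
    InCpm G u v w x ∨ InCminus G u v w x := by
  rcases hx with hx | hx | hx | hx <;> simp_all [InC0, InCplus]

theorem inCpm_or_inCplus (hx : InSomeClass G u v w x) (h : G.Adj u x = true) :
    InCpm G u v w x ∨ InCplus G u v w x := by
  rcases hx with hx | hx | hx | hx <;> simp_all [InC0, InCminus]

theorem inCplus_or_inC0 (hx : InSomeClass G u v w x) (h : G.Adj x u = false) :
    InCplus G u v w x ∨ InC0 G u v w x := by
  rcases hx with hx | hx | hx | hx <;> simp_all [InCminus, InCpm]

theorem inCminus_or_inC0 (hx : InSomeClass G u v w x) (h : G.Adj u x = false) :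
    InCminus G u v w x ∨ InC0 G u v w x := by
  rcases hx with hx | hx | hx | hx <;> simp_all [InCplus, InCpm]

theorem adj_eq [DecidableEq V] (hx : InSomeClass G u v w x) {c : V}
    (hc : c ∈ ({u, v, w} : Finset V)) : G.Adj x c = G.Adj x u ∧ G.Adj c x = G.Adj u x := by
  simp only [mem_insert, mem_singleton] at hc
  rcases hx with hx | hx | hx | hx <;> rcases hc with rfl | rfl | rfl <;>
    simp_all [InC0, InCminus, InCplus, InCpm]

end InSomeClass

theorem inSomeClass_of_not_mem [DecidableEq V]
    (hclass : ∀ x : V, x ≠ u → x ≠ v → x ≠ w → InSomeClass G u v w x)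
    (hx : x ∉ ({u, v, w} : Finset V)) : InSomeClass G u v w x := by
  simp only [mem_insert, mem_singleton, not_or] at hx
  exact hclass x hx.1 hx.2.1 hx.2.2

variable [Fintype V] [DecidableEq V]

-- `C ∪ C^± ∪ C⁻` and `C ∪ C^± ∪ C⁺`: outside `C`, the class of a vertex is read off from its
-- arcs to and from `u`.
def cycleSrc (G : SDigraph V) (u v w : V) : Finset V :=
  {u, v, w} ∪ univ.filter fun x => G.Adj x u = true

def cycleTgt (G : SDigraph V) (u v w : V) : Finset V :=
  {u, v, w} ∪ univ.filter fun y => G.Adj u y = true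

theorem mem_cycleTgt_of_adj (hclass : ∀ x : V, x ≠ u → x ≠ v → x ≠ w → InSomeClass G u v w x)
    {c : V} (hc : c ∈ ({u, v, w} : Finset V)) (h : G.Adj c x = true) : x ∈ cycleTgt G u v w := by
  by_cases hx : x ∈ ({u, v, w} : Finset V)
  · exact mem_union_left _ hx
  · refine mem_union_right _ (mem_filter.2 ⟨mem_univ _, ?_⟩)
    rw [← ((inSomeClass_of_not_mem hclass hx).adj_eq hc).2, h]

theorem mem_cycleSrc_of_adj (hclass : ∀ x : V, x ≠ u → x ≠ v → x ≠ w → InSomeClass G u v w x)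
    {c : V} (hc : c ∈ ({u, v, w} : Finset V)) (h : G.Adj x c = true) : x ∈ cycleSrc G u v w := by
  by_cases hx : x ∈ ({u, v, w} : Finset V)
  · exact mem_union_left _ hx
  · refine mem_union_right _ (mem_filter.2 ⟨mem_univ _, ?_⟩)
    rw [← ((inSomeClass_of_not_mem hclass hx).adj_eq hc).1, h]

theorem nonArcs_cycleSrc_cycleTgt_subset
    (hc : G.Adj u v = true ∧ G.Adj v w = true ∧ G.Adj w u = true ∧
      G.Adj v u = false ∧ G.Adj w v = false ∧ G.Adj u w = false)
    (hclass : ∀ x : V, x ≠ u → x ≠ v → x ≠ w → InSomeClass G u v w x)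
    (hM1 : ∀ x y : V, x ≠ u → x ≠ v → x ≠ w → y ≠ u → y ≠ v → y ≠ w → x ≠ y →
      (InCpm G u v w x ∨ InCminus G u v w x) →
      (InCpm G u v w y ∨ InCplus G u v w y) → G.Adj x y = true) :
    G.nonArcs (cycleSrc G u v w) (cycleTgt G u v w) ⊆ {(v, u), (w, v), (u, w)} := by
  rintro ⟨x, y⟩ hp
  obtain ⟨hxy, hadj⟩ := (mem_filter.1 hp).2
  obtain ⟨hx, hy⟩ := mem_product.1 (mem_filter.1 hp).1
  simp only [cycleSrc, cycleTgt, mem_union, mem_filter, mem_univ, true_and] at hx hy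
  by_cases hxC : x ∈ ({u, v, w} : Finset V) <;> by_cases hyC : y ∈ ({u, v, w} : Finset V)
  · simp only [mem_insert, mem_singleton] at hxC hyC ⊢
    rcases hxC with rfl | rfl | rfl <;> rcases hyC with rfl | rfl | rfl <;> simp_all
  · have huy : G.Adj u y = true := hy.resolve_left hyC
    rw [((inSomeClass_of_not_mem hclass hyC).adj_eq hxC).2, huy] at hadj
    exact Bool.noConfusion hadj
  · have hxu : G.Adj x u = true := hx.resolve_left hxC
    rw [((inSomeClass_of_not_mem hclass hxC).adj_eq hyC).1, hxu] at hadj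
    exact Bool.noConfusion hadj
  · have hxu : G.Adj x u = true := hx.resolve_left hxC
    have huy : G.Adj u y = true := hy.resolve_left hyC
    simp only [mem_insert, mem_singleton, not_or] at hxC hyC
    have := hM1 x y hxC.1 hxC.2.1 hxC.2.2 hyC.1 hyC.2.1 hyC.2.2 hxy
      ((hclass x hxC.1 hxC.2.1 hxC.2.2).inCpm_or_inCminus hxu)
      ((hclass y hyC.1 hyC.2.1 hyC.2.2).inCpm_or_inCplus huy)
    rw [this] at hadj
    exact Bool.noConfusion hadj

theorem arcs_compl_cycleSrc_compl_cycleTgt_eq_empty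
    (hclass : ∀ x : V, x ≠ u → x ≠ v → x ≠ w → InSomeClass G u v w x)
    (hM0 : ∀ x y : V, x ≠ u → x ≠ v → x ≠ w → y ≠ u → y ≠ v → y ≠ w → x ≠ y →
      (InCplus G u v w x ∨ InC0 G u v w x) →
      (InCminus G u v w y ∨ InC0 G u v w y) → G.Adj x y = false) :
    G.arcs (cycleSrc G u v w)ᶜ (cycleTgt G u v w)ᶜ = ∅ := by
  refine filter_eq_empty_iff.2 fun ⟨x, y⟩ hp => ?_
  obtain ⟨hx, hy⟩ := mem_product.1 hp
  simp only [cycleSrc, cycleTgt, mem_compl, mem_union, mem_filter, mem_univ, true_and,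
    mem_insert, mem_singleton, not_or, Bool.not_eq_true] at hx hy
  obtain ⟨⟨hxu, hxv, hxw⟩, hxu'⟩ := hx
  obtain ⟨⟨hyu, hyv, hyw⟩, huy'⟩ := hy
  by_cases hxy : x = y
  · simp [hxy, G.irrefl]
  · simp [hM0 x y hxu hxv hxw hyu hyv hyw hxy
      ((hclass x hxu hxv hxw).inCplus_or_inC0 hxu') ((hclass y hyu hyv hyw).inCminus_or_inC0 huy')]

end MPartition

/-- let `G` have a directed 3-cycle `(u,v),(v,w),(w,u)` with
no reverse arcs, suppose every vertex outside `C = {u,v,w}` lies in one of the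
classes `C⁰, C⁻, C⁺, C^±`, and suppose the arcs outside `C` satisfy the
`M`-partition constraints: every ordered pair from `C^± ∪ C⁻` to `C^± ∪ C⁺`
(distinct endpoints) is an arc, and no ordered pair from `C⁺ ∪ C⁰` to
`C⁻ ∪ C⁰` is an arc (the remaining pairs are unrestricted).  Then every
realization of the degree sequence of `G` induces a directed 3-cycle on `C`. -/
theorem statement11 {V : Type} [Fintype V] [DecidableEq V] (G : SDigraph V)
    (u v w : V) (huv : u ≠ v) (hvw : v ≠ w) (huw : u ≠ w)
    (hc : G.Adj u v = true ∧ G.Adj v w = true ∧ G.Adj w u = true ∧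
      G.Adj v u = false ∧ G.Adj w v = false ∧ G.Adj u w = false)
    (hclass : ∀ x : V, x ≠ u → x ≠ v → x ≠ w →
      InC0 G u v w x ∨ InCminus G u v w x ∨ InCplus G u v w x ∨ InCpm G u v w x)
    (hM1 : ∀ x y : V, x ≠ u → x ≠ v → x ≠ w → y ≠ u → y ≠ v → y ≠ w → x ≠ y →
      (InCpm G u v w x ∨ InCminus G u v w x) →
      (InCpm G u v w y ∨ InCplus G u v w y) → G.Adj x y = true)
    (hM0 : ∀ x y : V, x ≠ u → x ≠ v → x ≠ w → y ≠ u → y ≠ v → y ≠ w → x ≠ y →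
      (InCplus G u v w x ∨ InC0 G u v w x) →
      (InCminus G u v w y ∨ InC0 G u v w y) → G.Adj x y = false)
    (G' : SDigraph V)
    (hG' : Realizes G' (fun z => (G.outDeg z, G.inDeg z))) :
    InducesC3 G' u v w := by
  have hCA : {u, v, w} ⊆ cycleSrc G u v w := subset_union_left
  have hCB : {u, v, w} ⊆ cycleTgt G u v w := subset_union_left
  have hcard : #(G'.nonArcs (cycleSrc G u v w) (cycleTgt G u v w)) ≤ 3 := by
    have hcount := SDigraph.card_nonArcs_add_card_arcs_compl_of_realizes hG'
      (cycleSrc G u v w) (cycleTgt G u v w)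
    rw [arcs_compl_cycleSrc_compl_cycleTgt_eq_empty hclass hM0, card_empty] at hcount
    have hG := (card_le_card (nonArcs_cycleSrc_cycleTgt_subset hc hclass hM1)).trans card_le_three
    omega
  obtain ⟨-, -, -, hnvu, hnwv, hnuw⟩ := hc
  refine inducesC3_of_card_nonArcs_le_three huv hvw huw hCA hCB hcard
    (SDigraph.subset_image_fst_nonArcs_of_realizes hG' hCA
      (fun c hcC _ => mem_cycleTgt_of_adj hclass hcC) ?_)
    (SDigraph.subset_image_snd_nonArcs_of_realizes hG' hCB
      (fun c hcC _ => mem_cycleSrc_of_adj hclass hcC) ?_)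
  all_goals simp only [mem_insert, mem_singleton, forall_eq_or_imp, forall_eq]
  · exact ⟨⟨w, hCB (by simp), huw, hnuw⟩, ⟨u, hCB (by simp), huv.symm, hnvu⟩,
      ⟨v, hCB (by simp), hvw.symm, hnwv⟩⟩
  · exact ⟨⟨v, hCA (by simp), huv.symm, hnvu⟩, ⟨w, hCA (by simp), hvw.symm, hnwv⟩,
      ⟨u, hCA (by simp), huw, hnuw⟩⟩
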